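/- arXiv:2309.16040 — 5 statements merged into one kernel-verified Lean document; each statement's English description precedes it below -/
import Mathlib

section
/- Let R ∈ SO(3), t, n ∈ ℝ³, and l₁, l₂, l₁', l₂' ∈ ℝ³. Suppose there exist nonzero real numbers λ₁, λ₂ such that lᵢ = λᵢ · (Rᵀ − n tᵀ) lᵢ' for i = 1, 2 (i.e., the two line correspondences satisfy the common calibrated homography constraint with plane normal n). Then the pair of line junctions satisfies the calibrated epipolar constraint: ⟨l₁' × l₂', t × (R (l₁ × l₂))⟩ = 0. -/
/-!
Write `A = R - n tᵀ`, so that the homography is `Aᵀ` and `l₁ × l₂` is a multiple of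
`adj(Aᵀ)ᵀ (l₁' × l₂') = adj(A) w` with `w = l₁' × l₂'`. Since `R = A + t nᵀ`,
`R adj(A) w = det(A) w + ⟨n, adj(A) w⟩ t`, and crossing with `t` leaves `det(A) (t × w)`,
which is orthogonal to `w`.
-/

open Matrix

section CommRing

variable {K : Type*} [CommRing K]

theorem cross_mulVec_mulVec (M : Matrix (Fin 3) (Fin 3) K) (a b : Fin 3 → K) :
    (M *ᵥ a) ⨯₃ (M *ᵥ b) = M.adjugateᵀ *ᵥ (a ⨯₃ b) := by
  ext i
  fin_cases i <;>
    simp [cross_apply, adjugate_fin_three, mulVec, dotProduct, Fin.sum_univ_three] <;> ring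

theorem mulVec_adjugate_sub_vecMulVec {ι : Type*} [Fintype ι] [DecidableEq ι]
    (B : Matrix ι ι K) (t u w : ι → K) :
    B *ᵥ ((B - vecMulVec t u).adjugate *ᵥ w) =
      (B - vecMulVec t u).det • w + (u ⬝ᵥ (B - vecMulVec t u).adjugate *ᵥ w) • t := by
  set A := B - vecMulVec t u
  calc B *ᵥ (A.adjugate *ᵥ w) = (A + vecMulVec t u) *ᵥ (A.adjugate *ᵥ w) := by
        rw [sub_add_cancel]
    _ = A.det • w + (u ⬝ᵥ A.adjugate *ᵥ w) • t := by
        rw [add_mulVec, mulVec_mulVec, mul_adjugate, smul_mulVec, one_mulVec,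
          vecMulVec_mulVec, op_smul_eq_smul]

theorem cross_smul_add_smul_self (t w : Fin 3 → K) (c d : K) :
    t ⨯₃ (c • w + d • t) = c • (t ⨯₃ w) := by
  rw [map_add, map_smul, map_smul, cross_self, smul_zero, add_zero]

theorem dot_cross_mulVec_adjugate_sub_vecMulVec (B : Matrix (Fin 3) (Fin 3) K)
    (t u w : Fin 3 → K) :
    w ⬝ᵥ (t ⨯₃ (B *ᵥ ((B - vecMulVec t u).adjugate *ᵥ w))) = 0 := by
  rw [mulVec_adjugate_sub_vecMulVec, cross_smul_add_smul_self, dotProduct_smul,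
    dot_cross_self, smul_zero]

end CommRing

theorem coplanarity_implies_junction_epipolar_general
    (R : Matrix (Fin 3) (Fin 3) ℝ)
    (t n l₁ l₂ l₁' l₂' : Fin 3 → ℝ)
    (h : ∃ lam₁ lam₂ : ℝ, lam₁ ≠ 0 ∧ lam₂ ≠ 0 ∧
      l₁ = lam₁ • ((Rᵀ - vecMulVec n t) *ᵥ l₁') ∧
      l₂ = lam₂ • ((Rᵀ - vecMulVec n t) *ᵥ l₂')) :
    (l₁' ⨯₃ l₂') ⬝ᵥ (t ⨯₃ (R *ᵥ (l₁ ⨯₃ l₂))) = 0 := by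
  obtain ⟨lam₁, lam₂, -, -, rfl, rfl⟩ := h
  have homography_eq : Rᵀ - vecMulVec n t = (R - vecMulVec t n)ᵀ := by
    rw [transpose_sub, transpose_vecMulVec]
  set A := R - vecMulVec t n
  have junction : (lam₁ • Aᵀ *ᵥ l₁') ⨯₃ (lam₂ • Aᵀ *ᵥ l₂') =
      (lam₁ * lam₂) • (A.adjugate *ᵥ (l₁' ⨯₃ l₂')) := by
    rw [LinearMap.map_smul₂, map_smul, cross_mulVec_mulVec, ← adjugate_transpose,
      transpose_transpose, smul_smul]
  rw [homography_eq, junction, mulVec_smul, map_smul, dotProduct_smul,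
    dot_cross_mulVec_adjugate_sub_vecMulVec, smul_zero]

/-- **Coplanarity implies junction constraint.**
If two line correspondences `(l₁, l₁')`, `(l₂, l₂')` satisfy the common calibrated
homography constraint `lᵢ = λᵢ • (Rᵀ − n tᵀ) lᵢ'` for a rotation `R ∈ SO(3)`,
translation `t` and plane normal `n`, then the pair of line junctions satisfies the
calibrated epipolar constraint `⟨l₁' × l₂', t × (R (l₁ × l₂))⟩ = 0`. -/
theorem coplanarity_implies_junction_epipolar
    (R : Matrix (Fin 3) (Fin 3) ℝ) (hRorth : Rᵀ * R = 1) (hRdet : R.det = 1)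
    (t n l₁ l₂ l₁' l₂' : Fin 3 → ℝ)
    (h : ∃ lam₁ lam₂ : ℝ, lam₁ ≠ 0 ∧ lam₂ ≠ 0 ∧
      l₁ = lam₁ • ((Rᵀ - vecMulVec n t) *ᵥ l₁') ∧
      l₂ = lam₂ • ((Rᵀ - vecMulVec n t) *ᵥ l₂')) :
    (l₁' ⨯₃ l₂') ⬝ᵥ (t ⨯₃ (R *ᵥ (l₁ ⨯₃ l₂))) = 0 :=
  coplanarity_implies_junction_epipolar_general R t n l₁ l₂ l₁' l₂' h
end

section
/- Let R ∈ SO(3), t ∈ ℝ³, and l₁, l₂, l₁', l₂' ∈ ℝ³. Set dᵢ = lᵢ × (Rᵀ lᵢ') for i = 1, 2 and m = d₁ × d₂. Assume: (i) there exists X ∈ ℝ³ with ⟨lᵢ, X⟩ = 0 and ⟨lᵢ', R X + t⟩ = 0 for i = 1, 2 (the backprojected planes of all four image lines share the point X); (ii) d₁ and d₂ are linearly independent; (iii) ⟨m, X⟩ ≠ 0; and (iv) ⟨m, X + Rᵀ t⟩ ≠ 0 (the plane through X spanned by d₁, d₂ passes through neither camera center). Then there exist n ∈ ℝ³ and nonzero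 real numbers λ₁, λ₂ such that (Rᵀ − n tᵀ) lᵢ' = λᵢ · lᵢ for i = 1, 2, i.e., the two line correspondences satisfy a common calibrated homography constraint. -/
/-!
Put `s = Rᵀ l'`, `μ = ⟨m, X⟩` and `n = -m / μ`. Since the second backprojected plane
contains `X`, `⟨t, l'⟩ = -⟨s, X⟩`, so the homography sends `l'` to
`(μ s - ⟨s, X⟩ m) / μ`. This vector and `l` are both orthogonal to `X` and to `d = l × s`,
and `d, X` are independent because `⟨d, m⟩ = 0` while `⟨X, m⟩ ≠ 0`; so both lie on the
line spanned by `d × X`. The vector is nonzero: if `μ s = ⟨s, X⟩ m`, pairing with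
`X + Rᵀ t` (orthogonal to `s`, not to `m`) gives `⟨s, X⟩ = 0`, hence `s = 0` and `d = 0`.
-/

open Matrix

namespace Matrix

section CrossProduct

variable {a b u v w : Fin 3 → ℝ}

theorem exists_smul_eq_of_cross_eq_zero (hw : w ≠ 0) (h : w ⨯₃ v = 0) :
    ∃ c : ℝ, c • w = v := by
  by_contra! hc
  exact crossProduct_ne_zero_iff_linearIndependent.mpr ((LinearIndependent.pair_iff' hw).mpr hc) h

theorem exists_smul_cross_eq_of_dot_eq_zero (hab : LinearIndependent ℝ ![a, b])
    (hua : a ⬝ᵥ u = 0) (hub : b ⬝ᵥ u = 0) : ∃ c : ℝ, c • a ⨯₃ b = u :=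
  exists_smul_eq_of_cross_eq_zero (crossProduct_ne_zero_iff_linearIndependent.mpr hab) <| by
    rw [cross_cross_eq_smul_sub_smul, hua, hub, zero_smul, zero_smul, sub_zero]

theorem exists_smul_eq_of_dot_eq_zero (hab : LinearIndependent ℝ ![a, b]) (hv : v ≠ 0)
    (hua : a ⬝ᵥ u = 0) (hub : b ⬝ᵥ u = 0) (hva : a ⬝ᵥ v = 0) (hvb : b ⬝ᵥ v = 0) :
    ∃ c : ℝ, c • v = u := by
  obtain ⟨α, rfl⟩ := exists_smul_cross_eq_of_dot_eq_zero hab hua hub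
  obtain ⟨β, rfl⟩ := exists_smul_cross_eq_of_dot_eq_zero hab hva hvb
  have hβ : β ≠ 0 := by rintro rfl; simp at hv
  exact ⟨α / β, by rw [smul_smul, div_mul_cancel₀ _ hβ]⟩

end CrossProduct

section Orthogonal

variable {ι α : Type*} [Fintype ι] [CommRing α] {R : Matrix ι ι α}

theorem transpose_mulVec_dotProduct (u v : ι → α) :
    (Rᵀ *ᵥ u) ⬝ᵥ v = u ⬝ᵥ (R *ᵥ v) := by
  rw [mulVec_transpose, ← dotProduct_mulVec]

theorem transpose_mulVec_dotProduct_transpose_mulVec [DecidableEq ι] (hR : R * Rᵀ = 1)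
    (u v : ι → α) :
    (Rᵀ *ᵥ u) ⬝ᵥ (Rᵀ *ᵥ v) = u ⬝ᵥ v := by
  rw [transpose_mulVec_dotProduct, mulVec_mulVec, hR, one_mulVec]

theorem dotProduct_mulVec_add [DecidableEq ι] (hR : R * Rᵀ = 1) (l X t : ι → α) :
    l ⬝ᵥ (R *ᵥ X + t) = (Rᵀ *ᵥ l) ⬝ᵥ (X + Rᵀ *ᵥ t) := by
  rw [dotProduct_add, dotProduct_add, transpose_mulVec_dotProduct,
    transpose_mulVec_dotProduct_transpose_mulVec hR]

theorem sub_vecMulVec_mulVec_of_dotProduct_eq_zero [DecidableEq ι] (hR : R * Rᵀ = 1)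
    {l X t : ι → α} (h : l ⬝ᵥ (R *ᵥ X + t) = 0) (n : ι → α) :
    (Rᵀ - vecMulVec n t) *ᵥ l = Rᵀ *ᵥ l + ((Rᵀ *ᵥ l) ⬝ᵥ X) • n := by
  have htl : t ⬝ᵥ l = -((Rᵀ *ᵥ l) ⬝ᵥ X) := by
    rw [dotProduct_mulVec_add hR, dotProduct_add,
      transpose_mulVec_dotProduct_transpose_mulVec hR, dotProduct_comm l t] at h
    exact eq_neg_of_add_eq_zero_right h
  rw [sub_mulVec, vecMulVec_mulVec, op_smul_eq_smul, htl, neg_smul, sub_neg_eq_add]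

end Orthogonal

end Matrix

variable {d l s m X p : Fin 3 → ℝ}

theorem linearIndependent_of_dot_eq_zero_of_dot_ne_zero (hd : d ≠ 0) (hdm : d ⬝ᵥ m = 0)
    (hmX : m ⬝ᵥ X ≠ 0) : LinearIndependent ℝ ![d, X] := by
  refine (LinearIndependent.pair_iff' hd).mpr fun a haX ↦ hmX ?_
  rw [← haX, dotProduct_smul, dotProduct_comm, hdm, smul_zero]

/-- `p` stands for `Rᵀ t`, so `X + p` is `X` minus the second camera's center. -/
theorem exists_smul_eq_of_mem_planes (hd : l ⨯₃ s ≠ 0) (hdm : (l ⨯₃ s) ⬝ᵥ m = 0)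
    (hlX : l ⬝ᵥ X = 0) (hsXp : s ⬝ᵥ (X + p) = 0) (hmX : m ⬝ᵥ X ≠ 0)
    (hmXp : m ⬝ᵥ (X + p) ≠ 0) :
    ∃ c : ℝ, c ≠ 0 ∧ c • l = (m ⬝ᵥ X) • s - (s ⬝ᵥ X) • m := by
  set u := (m ⬝ᵥ X) • s - (s ⬝ᵥ X) • m with hu_def
  have hl : l ≠ 0 := by rintro rfl; simp at hd
  have hu : u ≠ 0 := by
    intro hu
    have hsX : s ⬝ᵥ X = 0 := by
      have := congrArg (· ⬝ᵥ (X + p)) (sub_eq_zero.mp hu)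
      simp only [smul_dotProduct, hsXp, smul_eq_mul, mul_zero] at this
      exact (mul_eq_zero.mp this.symm).resolve_right hmXp
    rw [hu_def, hsX, zero_smul, sub_zero, smul_eq_zero] at hu
    exact hd (by rw [hu.resolve_left hmX, map_zero])
  have hdu : (l ⨯₃ s) ⬝ᵥ u = 0 := by
    rw [dotProduct_sub, dotProduct_smul, dotProduct_smul, dotProduct_comm _ s, dot_cross_self,
      hdm, smul_zero, smul_zero, sub_zero]
  have hXu : X ⬝ᵥ u = 0 := by
    rw [dotProduct_sub, dotProduct_smul, dotProduct_smul, dotProduct_comm X s,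
      dotProduct_comm X m, smul_eq_mul, smul_eq_mul, mul_comm, sub_self]
  obtain ⟨c, hc⟩ := exists_smul_eq_of_dot_eq_zero
    (linearIndependent_of_dot_eq_zero_of_dot_ne_zero hd hdm hmX) hl hdu hXu
    (by rw [dotProduct_comm, dot_self_cross]) (by rw [dotProduct_comm, hlX])
  exact ⟨c, by rintro rfl; exact hu (by rw [← hc, zero_smul]), hc⟩

theorem junction_implies_coplanarity_general
    (R : Matrix (Fin 3) (Fin 3) ℝ) (hRorth : Rᵀ * R = 1)
    (t l₁ l₂ l₁' l₂' d₁ d₂ m : Fin 3 → ℝ)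
    (hd₁ : d₁ = l₁ ⨯₃ (Rᵀ *ᵥ l₁')) (hd₂ : d₂ = l₂ ⨯₃ (Rᵀ *ᵥ l₂'))
    (hm : m = d₁ ⨯₃ d₂)
    (hind : LinearIndependent ℝ ![d₁, d₂])
    (hX : ∃ X : Fin 3 → ℝ,
      (l₁ ⬝ᵥ X = 0 ∧ l₁' ⬝ᵥ (R *ᵥ X + t) = 0) ∧
      (l₂ ⬝ᵥ X = 0 ∧ l₂' ⬝ᵥ (R *ᵥ X + t) = 0) ∧
      m ⬝ᵥ X ≠ 0 ∧ m ⬝ᵥ (X + Rᵀ *ᵥ t) ≠ 0) :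
    ∃ (n : Fin 3 → ℝ) (lam₁ lam₂ : ℝ), lam₁ ≠ 0 ∧ lam₂ ≠ 0 ∧
      (Rᵀ - vecMulVec n t) *ᵥ l₁' = lam₁ • l₁ ∧
      (Rᵀ - vecMulVec n t) *ᵥ l₂' = lam₂ • l₂ := by
  obtain ⟨X, ⟨hl₁X, hl₁'X⟩, ⟨hl₂X, hl₂'X⟩, hmX, hmXt⟩ := hX
  have hR : R * Rᵀ = 1 := mul_eq_one_comm.mp hRorth
  have hd₁m : d₁ ⬝ᵥ m = 0 := hm ▸ dot_self_cross d₁ d₂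
  have hd₂m : d₂ ⬝ᵥ m = 0 := hm ▸ dot_cross_self d₁ d₂
  have hd₁0 : d₁ ≠ 0 := by simpa using hind.ne_zero 0
  have hd₂0 : d₂ ≠ 0 := by simpa using hind.ne_zero 1
  subst hd₁ hd₂
  obtain ⟨c₁, hc₁, he₁⟩ := exists_smul_eq_of_mem_planes hd₁0 hd₁m hl₁X
    ((dotProduct_mulVec_add hR _ _ _).symm.trans hl₁'X) hmX hmXt
  obtain ⟨c₂, hc₂, he₂⟩ := exists_smul_eq_of_mem_planes hd₂0 hd₂m hl₂X
    ((dotProduct_mulVec_add hR _ _ _).symm.trans hl₂'X) hmX hmXt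
  refine ⟨-(m ⬝ᵥ X)⁻¹ • m, (m ⬝ᵥ X)⁻¹ * c₁, (m ⬝ᵥ X)⁻¹ * c₂,
    mul_ne_zero (inv_ne_zero hmX) hc₁, mul_ne_zero (inv_ne_zero hmX) hc₂, ?_, ?_⟩
  · rw [sub_vecMulVec_mulVec_of_dotProduct_eq_zero hR hl₁'X, mul_smul, he₁, smul_sub,
      inv_smul_smul₀ hmX]
    module
  · rw [sub_vecMulVec_mulVec_of_dotProduct_eq_zero hR hl₂'X, mul_smul, he₂, smul_sub,
      inv_smul_smul₀ hmX]
    module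

/-- **Junction constraint implies coplanarity.**
Let `R ∈ SO(3)`, `t ∈ ℝ³`, and let `(l₁, l₁')`, `(l₂, l₂')` be line correspondences.
Set `dᵢ = lᵢ × (Rᵀ lᵢ')` and `m = d₁ × d₂`. Assume the backprojected planes of all
four image lines share a common point `X`, that `d₁, d₂` are linearly independent,
and that `⟨m, X⟩ ≠ 0` and `⟨m, X + Rᵀ t⟩ ≠ 0` (the plane through `X` spanned by
`d₁, d₂` passes through neither camera center). Then the two line correspondences
satisfy a common calibrated homography constraint `(Rᵀ − n tᵀ) lᵢ' = λᵢ • lᵢ`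
with nonzero scalars `λ₁, λ₂`. -/
theorem junction_implies_coplanarity
    (R : Matrix (Fin 3) (Fin 3) ℝ) (hRorth : Rᵀ * R = 1) (hRdet : R.det = 1)
    (t l₁ l₂ l₁' l₂' d₁ d₂ m : Fin 3 → ℝ)
    (hd₁ : d₁ = l₁ ⨯₃ (Rᵀ *ᵥ l₁')) (hd₂ : d₂ = l₂ ⨯₃ (Rᵀ *ᵥ l₂'))
    (hm : m = d₁ ⨯₃ d₂)
    (hind : LinearIndependent ℝ ![d₁, d₂])
    (hX : ∃ X : Fin 3 → ℝ,
      (l₁ ⬝ᵥ X = 0 ∧ l₁' ⬝ᵥ (R *ᵥ X + t) = 0) ∧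
      (l₂ ⬝ᵥ X = 0 ∧ l₂' ⬝ᵥ (R *ᵥ X + t) = 0) ∧
      m ⬝ᵥ X ≠ 0 ∧ m ⬝ᵥ (X + Rᵀ *ᵥ t) ≠ 0) :
    ∃ (n : Fin 3 → ℝ) (lam₁ lam₂ : ℝ), lam₁ ≠ 0 ∧ lam₂ ≠ 0 ∧
      (Rᵀ - vecMulVec n t) *ᵥ l₁' = lam₁ • l₁ ∧
      (Rᵀ - vecMulVec n t) *ᵥ l₂' = lam₂ • l₂ :=
  junction_implies_coplanarity_general R hRorth t l₁ l₂ l₁' l₂' d₁ d₂ m hd₁ hd₂ hm hind hX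
end

section
/- Let R ∈ SO(3), t ∈ ℝ³, and let p, p' ∈ ℝ³ satisfy the calibrated epipolar constraint ⟨p', t × (R p)⟩ = 0. If the vectors R p and p' are linearly independent, then there exist real numbers s, s' such that s' · p' = s · (R p) + t; i.e., the 3D point X = s · p projects (in homogeneous coordinates) to p in camera 1 and to a nonzero multiple of p' in camera 2, so the correspondence (p, p') can be triangulated to a common 3D point. -/
open Matrix

/-! The epipolar constraint says that the triple product of `t`, `R p` and `p'` vanishes, i.e.
`det ![t, R p, p'] = 0`. Since `R p` and `p'` are linearly independent, `t` must then lie in their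
span, and a relation `t = a • R p + b • p'` is exactly the claim with `s = -a`, `s' = b`. -/

theorem mem_span_range_of_det_cons_eq_zero {K : Type*} [Field K] {n : ℕ}
    {a : Fin (n + 1) → K} {v : Fin n → Fin (n + 1) → K} (hv : LinearIndependent K v)
    (hdet : det (of (Fin.cons a v)) = 0) : a ∈ Submodule.span K (Set.range v) := by
  by_contra ha
  have hli : LinearIndependent K (Fin.cons a v) := linearIndependent_finCons.mpr ⟨hv, ha⟩
  exact ((isUnit_iff_isUnit_det _).mp (linearIndependent_rows_iff_isUnit.mp hli)).ne_zero hdet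

theorem mem_span_pair_of_dotProduct_cross_eq_zero {K : Type*} [Field K] {a b c : Fin 3 → K}
    (hbc : LinearIndependent K ![b, c]) (h : c ⬝ᵥ (a ⨯₃ b) = 0) :
    a ∈ Submodule.span K {b, c} := by
  have hdet : det ![a, b, c] = 0 := by rwa [triple_product_permutation, triple_product_eq_det] at h
  rw [← range_cons_cons_empty b c ![]]
  exact mem_span_range_of_det_cons_eq_zero hbc hdet

theorem epipolar_triangulation_general
    (R : Matrix (Fin 3) (Fin 3) ℝ)
    (t p p' : Fin 3 → ℝ)
    (hE : p' ⬝ᵥ (t ⨯₃ (R *ᵥ p)) = 0)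
    (hind : LinearIndependent ℝ ![R *ᵥ p, p']) :
    ∃ s s' : ℝ, s' • p' = s • (R *ᵥ p) + t := by
  obtain ⟨a, b, hab⟩ :=
    Submodule.mem_span_pair.mp (mem_span_pair_of_dotProduct_cross_eq_zero hind hE)
  exact ⟨-a, b, by rw [← hab]; module⟩

/-- **Epipolar constraint allows triangulation.**
Let `R ∈ SO(3)`, `t ∈ ℝ³`, and let `(p, p')` satisfy the calibrated epipolar constraint
`⟨p', t × (R p)⟩ = 0`. If `R p` and `p'` are linearly independent, then there exist
scalars `s, s'` with `s' • p' = s • (R p) + t`, i.e. the 3D point `X = s • p` projects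
to `p` in camera 1 and to a multiple of `p'` in camera 2. -/
theorem epipolar_triangulation
    (R : Matrix (Fin 3) (Fin 3) ℝ) (hRorth : Rᵀ * R = 1) (hRdet : R.det = 1)
    (t p p' : Fin 3 → ℝ)
    (hE : p' ⬝ᵥ (t ⨯₃ (R *ᵥ p)) = 0)
    (hind : LinearIndependent ℝ ![R *ᵥ p, p']) :
    ∃ s s' : ℝ, s' • p' = s • (R *ᵥ p) + t :=
  epipolar_triangulation_general R t p p' hE hind
end

section
/- Let x, x' ∈ ℝ³ be unit vectors, let e₂ = (0, 1, 0), and let Q, Q' ∈ SO(3) satisfy Q x = e₂ and Q' x' = e₂. For φ ∈ ℝ let R_y(φ) denote the rotation about the y-axis, the matrix with rows (cos φ, 0, −sin φ), (0, 1, 0), (sin φ, 0, cos φ). Then for every R ∈ SO(3): R x = x' if and only if there exists φ ∈ ℝ with R = Q'ᵀ R_y(φ) Q. Hence the rotations consistent with one vanishing point correspondence (x, x') are exactly those of the decomposed form Q'ᵀ R_y(φ) Q. -/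
/-!
Conjugation reduces everything to `e₂`: `S = Q' R Qᵀ` lies in `SO(3)`, and `R x = x'` exactly
when `S e₂ = e₂`. If `S` fixes `e₂` then so does `Sᵀ = S⁻¹`, so `e₂` is both the middle column
and the middle row of `S`; the remaining entries form a `2 × 2` rotation, i.e. `S = R_y(φ)`.
-/

open Matrix

/-- Rotation about the y-axis by angle `φ`. -/
noncomputable def rotY (φ : ℝ) : Matrix (Fin 3) (Fin 3) ℝ :=
  !![Real.cos φ, 0, -Real.sin φ; 0, 1, 0; Real.sin φ, 0, Real.cos φ]

lemma Real.exists_cos_eq_sin_eq_of_sq_add_sq_eq_one {a b : ℝ} (h : a ^ 2 + b ^ 2 = 1) :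
    ∃ φ : ℝ, Real.cos φ = a ∧ Real.sin φ = b := by
  have hnorm : ‖(⟨a, b⟩ : ℂ)‖ = 1 := by
    rw [Complex.norm_def, Complex.normSq_mk, ← sq, ← sq, h, Real.sqrt_one]
  obtain ⟨φ, hφ⟩ := (Complex.norm_eq_one_iff _).mp hnorm
  exact ⟨φ, by simpa using congrArg Complex.re hφ, by simpa using congrArg Complex.im hφ⟩

section Orthogonal

variable {n R : Type*} [Fintype n] [DecidableEq n] [CommSemiring R] {A B : Matrix n n R}

lemma Matrix.transpose_mul_self_mul_eq_one (hA : Aᵀ * A = 1) (hB : Bᵀ * B = 1) :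
    (A * B)ᵀ * (A * B) = 1 := by
  rw [transpose_mul, Matrix.mul_assoc, ← Matrix.mul_assoc Aᵀ, hA, Matrix.one_mul, hB]

lemma Matrix.transpose_transpose_mul_self_eq_one (hA : Aᵀ * A = 1) : Aᵀᵀ * Aᵀ = 1 := by
  rw [transpose_transpose]
  exact mul_eq_one_comm.mp hA

lemma Matrix.transpose_mulVec_eq_of_mulVec_eq (hA : Aᵀ * A = 1) {v w : n → R}
    (h : A *ᵥ v = w) : Aᵀ *ᵥ w = v := by
  rw [← h, mulVec_mulVec, hA, one_mulVec]

end Orthogonal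

lemma rotY_mulVec_e₂ (φ : ℝ) : rotY φ *ᵥ ![0, 1, 0] = ![0, 1, 0] := by
  ext i
  fin_cases i <;> simp [rotY, mulVec, dotProduct, Fin.sum_univ_three]

lemma exists_eq_rotY_of_mulVec_e₂ {S : Matrix (Fin 3) (Fin 3) ℝ} (hS : Sᵀ * S = 1)
    (hdet : S.det = 1) (he : S *ᵥ ![0, 1, 0] = ![0, 1, 0]) : ∃ φ : ℝ, S = rotY φ := by
  have hcol : ∀ i, S i 1 = ![0, 1, 0] i := fun i => by
    simpa [mulVec, dotProduct, Fin.sum_univ_three] using congrFun he i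
  have hrow : ∀ j, S 1 j = ![0, 1, 0] j := fun j => by
    simpa [mulVec, dotProduct, Fin.sum_univ_three] using
      congrFun (transpose_mulVec_eq_of_mulVec_eq hS he) j
  have h01 : S 0 1 = 0 := hcol 0
  have h21 : S 2 1 = 0 := hcol 2
  have h11 : S 1 1 = 1 := hcol 1
  have h10 : S 1 0 = 0 := hrow 0
  have h12 : S 1 2 = 0 := hrow 2
  have hnorm : S 0 0 ^ 2 + S 2 0 ^ 2 = 1 := by
    simpa [Matrix.mul_apply, Fin.sum_univ_three, h10, sq] using congrFun (congrFun hS 0) 0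
  have horth : S 0 0 * S 0 2 + S 2 0 * S 2 2 = 0 := by
    simpa [Matrix.mul_apply, Fin.sum_univ_three, h10] using congrFun (congrFun hS 0) 2
  have hdet' : S 0 0 * S 2 2 - S 0 2 * S 2 0 = 1 := by
    rw [← hdet, det_fin_three, h01, h11, h21, h10, h12]; ring
  have h22 : S 2 2 = S 0 0 := by
    linear_combination (-S 2 2) * hnorm + S 2 0 * horth + S 0 0 * hdet'
  have h02 : S 0 2 = -S 2 0 := by
    linear_combination (-S 0 2) * hnorm + S 0 0 * horth - S 2 0 * hdet'
  obtain ⟨φ, hcos, hsin⟩ := Real.exists_cos_eq_sin_eq_of_sq_add_sq_eq_one hnorm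
  refine ⟨φ, ?_⟩
  ext i j
  fin_cases i <;> fin_cases j <;> simp [rotY, hcos, hsin, h01, h11, h21, h10, h12, h22, h02]

theorem rotation_decomposition_one_vp_general
    (x x' : Fin 3 → ℝ)
    (Q Q' : Matrix (Fin 3) (Fin 3) ℝ)
    (hQorth : Qᵀ * Q = 1) (hQdet : Q.det = 1)
    (hQ'orth : Q'ᵀ * Q' = 1) (hQ'det : Q'.det = 1)
    (hQx : Q *ᵥ x = ![0, 1, 0]) (hQ'x' : Q' *ᵥ x' = ![0, 1, 0])
    (R : Matrix (Fin 3) (Fin 3) ℝ) (hRorth : Rᵀ * R = 1) (hRdet : R.det = 1) :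
    R *ᵥ x = x' ↔ ∃ φ : ℝ, R = Q'ᵀ * rotY φ * Q := by
  have hQtx : Qᵀ *ᵥ ![0, 1, 0] = x := transpose_mulVec_eq_of_mulVec_eq hQorth hQx
  have hQ'tx' : Q'ᵀ *ᵥ ![0, 1, 0] = x' := transpose_mulVec_eq_of_mulVec_eq hQ'orth hQ'x'
  constructor
  · intro hRx
    have hSorth : (Q' * R * Qᵀ)ᵀ * (Q' * R * Qᵀ) = 1 :=
      transpose_mul_self_mul_eq_one (transpose_mul_self_mul_eq_one hQ'orth hRorth)
        (transpose_transpose_mul_self_eq_one hQorth)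
    have hSdet : (Q' * R * Qᵀ).det = 1 := by simp [det_mul, hQ'det, hRdet, hQdet]
    have hSe₂ : (Q' * R * Qᵀ) *ᵥ ![0, 1, 0] = ![0, 1, 0] := by
      rw [← mulVec_mulVec, ← mulVec_mulVec, hQtx, hRx, hQ'x']
    obtain ⟨φ, hφ⟩ := exists_eq_rotY_of_mulVec_e₂ hSorth hSdet hSe₂
    refine ⟨φ, ?_⟩
    rw [← hφ]
    simp only [← Matrix.mul_assoc, hQ'orth, Matrix.one_mul]
    rw [Matrix.mul_assoc, hQorth, Matrix.mul_one]
  · rintro ⟨φ, rfl⟩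
    rw [← mulVec_mulVec, ← mulVec_mulVec, hQx, rotY_mulVec_e₂, hQ'tx']

/-- **Decomposition of rotations consistent with one VP correspondence.**
Let `x, x'` be unit vectors, `e₂ = (0,1,0)`, and let `Q, Q' ∈ SO(3)` satisfy
`Q x = e₂`, `Q' x' = e₂`. Then a rotation `R ∈ SO(3)` satisfies `R x = x'` if and
only if `R = Q'ᵀ R_y(φ) Q` for some angle `φ`. -/
theorem rotation_decomposition_one_vp
    (x x' : Fin 3 → ℝ) (hx : x ⬝ᵥ x = 1) (hx' : x' ⬝ᵥ x' = 1)
    (Q Q' : Matrix (Fin 3) (Fin 3) ℝ)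
    (hQorth : Qᵀ * Q = 1) (hQdet : Q.det = 1)
    (hQ'orth : Q'ᵀ * Q' = 1) (hQ'det : Q'.det = 1)
    (hQx : Q *ᵥ x = ![0, 1, 0]) (hQ'x' : Q' *ᵥ x' = ![0, 1, 0])
    (R : Matrix (Fin 3) (Fin 3) ℝ) (hRorth : Rᵀ * R = 1) (hRdet : R.det = 1) :
    R *ᵥ x = x' ↔ ∃ φ : ℝ, R = Q'ᵀ * rotY φ * Q :=
  rotation_decomposition_one_vp_general x x' Q Q' hQorth hQdet hQ'orth hQ'det hQx hQ'x' R hRorth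
    hRdet
end

section
/- Let R ∈ SO(3), t ∈ ℝ³, d₁ ∈ ℝ³ with d₁ ≠ 0, and set v₁ = d₁ and v₁' = R d₁ (the vanishing points of direction d₁ in the two calibrated cameras [I | 0] and [R | t]). Let l, l' ∈ ℝ³ and suppose there exist X₀, d ∈ ℝ³ with d ≠ 0 and ⟨d, d₁⟩ = 0 such that ⟨l, X₀ + s d⟩ = 0 and ⟨l', R (X₀ + s d) + t⟩ = 0 for all s ∈ ℝ (i.e., a 3D line with direction d orthogonal to d₁ projects to the image line l in camera 1 and to l' in camera 2). If l × v₁ ≠ 0 and l' × v₁' ≠ 0, then there exists a nonzero μ ∈ ℝ with l × v₁ = μ · Rᵀ (l' × v₁'); i.e., the direction of the 3D line recovered from each image as the cross product of the image line and the vanishing point must be consistent between the two views. -/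
/-!
Both `l` and `d₁` are orthogonal to the line direction `d`, so `l × d₁` is a multiple of `d`.
In the second view `l'` and `R d₁` are orthogonal to `R d`, so `l' × R d₁` is a multiple of
`R d`, which `Rᵀ` carries back to a multiple of `d`.
-/

open Matrix

section CrossProduct

variable {F : Type*} [Field F]

theorem exists_smul_eq_of_cross_eq_zero {v w : Fin 3 → F} (hv : v ≠ 0) (h : v ⨯₃ w = 0) :
    ∃ a : F, a • v = w := by
  have hdep : ¬ LinearIndependent F ![v, w] :=
    fun hli => crossProduct_ne_zero_iff_linearIndependent.mpr hli h
  rwa [LinearIndependent.pair_iff' hv, not_forall_not] at hdep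

theorem exists_smul_eq_cross_of_dotProduct_eq_zero {w u v : Fin 3 → F} (hw : w ≠ 0)
    (hu : w ⬝ᵥ u = 0) (hv : w ⬝ᵥ v = 0) : ∃ a : F, a • w = u ⨯₃ v := by
  refine exists_smul_eq_of_cross_eq_zero hw ?_
  rw [cross_cross_eq_smul_sub_smul', hv, dotProduct_comm, hu, zero_smul, zero_smul, sub_zero]

end CrossProduct

section DotProduct

variable {n R : Type*} [Fintype n] [CommRing R]

theorem dotProduct_eq_zero_of_forall_dotProduct_add_smul_eq_zero {l p d : n → R}
    (h : ∀ s : R, l ⬝ᵥ (p + s • d) = 0) : l ⬝ᵥ d = 0 := by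
  have h₀ := h 0
  have h₁ := h 1
  rw [zero_smul, add_zero] at h₀
  rwa [one_smul, dotProduct_add, h₀, zero_add] at h₁

variable [DecidableEq n] {A : Matrix n n R}

theorem transpose_mulVec_mulVec_of_transpose_mul_self (hA : Aᵀ * A = 1) (x : n → R) :
    Aᵀ *ᵥ (A *ᵥ x) = x := by
  rw [mulVec_mulVec, hA, one_mulVec]

theorem mulVec_dotProduct_mulVec_of_transpose_mul_self (hA : Aᵀ * A = 1) (x y : n → R) :
    (A *ᵥ x) ⬝ᵥ (A *ᵥ y) = x ⬝ᵥ y := by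
  rw [dotProduct_mulVec, ← mulVec_transpose, mulVec_mulVec, hA, one_mulVec]

end DotProduct

theorem line_direction_consistency_general
    (R : Matrix (Fin 3) (Fin 3) ℝ) (hRorth : Rᵀ * R = 1)
    (t d₁ : Fin 3 → ℝ)
    (v₁ v₁' : Fin 3 → ℝ) (hv₁ : v₁ = d₁) (hv₁' : v₁' = R *ᵥ d₁)
    (l l' : Fin 3 → ℝ)
    (hline : ∃ X₀ d : Fin 3 → ℝ, d ≠ 0 ∧ d ⬝ᵥ d₁ = 0 ∧
      ∀ s : ℝ, l ⬝ᵥ (X₀ + s • d) = 0 ∧ l' ⬝ᵥ (R *ᵥ (X₀ + s • d) + t) = 0)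
    (h₁ : l ⨯₃ v₁ ≠ 0) (h₂ : l' ⨯₃ v₁' ≠ 0) :
    ∃ μ : ℝ, μ ≠ 0 ∧ l ⨯₃ v₁ = μ • (Rᵀ *ᵥ (l' ⨯₃ v₁')) := by
  obtain ⟨X₀, d, hd, hdd₁, hproj⟩ := hline
  subst v₁ v₁'
  have hdl : d ⬝ᵥ l = 0 := by
    rw [dotProduct_comm]
    exact dotProduct_eq_zero_of_forall_dotProduct_add_smul_eq_zero fun s => (hproj s).1
  have hRdl' : (R *ᵥ d) ⬝ᵥ l' = 0 := by
    rw [dotProduct_comm]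
    refine dotProduct_eq_zero_of_forall_dotProduct_add_smul_eq_zero (p := R *ᵥ X₀ + t) fun s => ?_
    simpa only [mulVec_add, mulVec_smul, add_right_comm] using (hproj s).2
  have hRd : R *ᵥ d ≠ 0 := fun h => hd <| by
    rw [← transpose_mulVec_mulVec_of_transpose_mul_self hRorth d, h, mulVec_zero]
  have hRdRd₁ : (R *ᵥ d) ⬝ᵥ (R *ᵥ d₁) = 0 := by
    rw [mulVec_dotProduct_mulVec_of_transpose_mul_self hRorth, hdd₁]
  obtain ⟨α, hα⟩ := exists_smul_eq_cross_of_dotProduct_eq_zero hd hdl hdd₁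
  obtain ⟨β, hβ⟩ := exists_smul_eq_cross_of_dotProduct_eq_zero hRd hRdl' hRdRd₁
  have hα0 : α ≠ 0 := by rintro rfl; exact h₁ (by rw [← hα, zero_smul])
  have hβ0 : β ≠ 0 := by rintro rfl; exact h₂ (by rw [← hβ, zero_smul])
  refine ⟨α / β, div_ne_zero hα0 hβ0, ?_⟩
  rw [← hα, ← hβ, mulVec_smul, transpose_mulVec_mulVec_of_transpose_mul_self hRorth, smul_smul,
    div_mul_cancel₀ _ hβ0]

/-- **Direction consistency of a line orthogonal to a vanishing point.**
Let `R ∈ SO(3)`, `t ∈ ℝ³`, and `d₁ ≠ 0` a 3D direction with vanishing points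
`v₁ = d₁` and `v₁' = R d₁` in the two cameras. Suppose a 3D line `X₀ + s d`
with direction `d ≠ 0` orthogonal to `d₁` projects to the image line `l` in
camera 1 and `l'` in camera 2. If `l × v₁ ≠ 0` and `l' × v₁' ≠ 0`, then
`l × v₁ = μ • Rᵀ (l' × v₁')` for some nonzero `μ`. -/
theorem line_direction_consistency
    (R : Matrix (Fin 3) (Fin 3) ℝ) (hRorth : Rᵀ * R = 1) (hRdet : R.det = 1)
    (t d₁ : Fin 3 → ℝ) (hd₁ : d₁ ≠ 0)
    (v₁ v₁' : Fin 3 → ℝ) (hv₁ : v₁ = d₁) (hv₁' : v₁' = R *ᵥ d₁)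
    (l l' : Fin 3 → ℝ)
    (hline : ∃ X₀ d : Fin 3 → ℝ, d ≠ 0 ∧ d ⬝ᵥ d₁ = 0 ∧
      ∀ s : ℝ, l ⬝ᵥ (X₀ + s • d) = 0 ∧ l' ⬝ᵥ (R *ᵥ (X₀ + s • d) + t) = 0)
    (h₁ : l ⨯₃ v₁ ≠ 0) (h₂ : l' ⨯₃ v₁' ≠ 0) :
    ∃ μ : ℝ, μ ≠ 0 ∧ l ⨯₃ v₁ = μ • (Rᵀ *ᵥ (l' ⨯₃ v₁')) :=
  line_direction_consistency_general R hRorth t d₁ v₁ v₁' hv₁ hv₁' l l' hline h₁ h₂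
end
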